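/- arXiv:2306.15972 — 3 statements merged into one kernel-verified Lean document; each statement's English description precedes it below -/
import Mathlib

section
/- For every integer n ≥ 0 and every direction d ∈ ℝ, the q-Laplace transform of order k of the monomial z ↦ z^n along direction d equals (q^{1/k})^{n(n−1)/2} · T^n; that is, (k/log q)·∫_{L_d} u^n / Θ_{q^{1/k}}(u/T) · du/u = q^{n(n−1)/(2k)} T^n, where Θ_{q^{1/k}}(z) = Σ_{p∈ℤ} q^{−p(p−1)/(2k)} z^p is the Jacobi theta function of order k and L_d = [0,∞)e^{id}. -/
open Complex Set

/-- Jacobi theta function of order `k`:  `Θ_{q^{1/k}}(z) = Σ_{p∈ℤ} q^{−p(p−1)/(2k)} z^p`. -/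
noncomputable def thetaQ (q : ℝ) (k : ℕ) (z : ℂ) : ℂ :=
  ∑' p : ℤ, ((q : ℂ) ^ (((-(p * (p - 1)) : ℝ) / (2 * k) : ℝ) : ℂ)) * z ^ p

/-!
Put `β = log q / k`. Completing the square gives `Θ(exp (β a - β/2)) = exp (β a² / 2) Ψ_β(a)`
with `Ψ_β(a) = Σ_p exp (-β (p - a)² / 2)`, a `1`-periodic entire function. The substitution
`u = T exp (β a - β/2)`, `a = x + i y` with `y` fixed by `d`, maps `ℝ` onto the ray `L_d` and turns
the transform into `T^n q^{n(n-1)/(2k)} ∫_ℝ exp (-β (a - n)² / 2) / Ψ_β(a) dx`. Folding `ℝ` onto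
`[0, 1)` by periodicity, the integrand sums to `Ψ_β(a) / Ψ_β(a) = 1`; this holds almost everywhere
since `Ψ_β(0) > 0`, so the zeros of `Ψ_β` on a horizontal line are discrete.
-/

open Filter MeasureTheory Topology
open scoped Real

noncomputable def periodizedGaussian (β : ℝ) (a : ℂ) : ℂ :=
  ∑' p : ℤ, cexp (-(β / 2 : ℂ) * (p - a) ^ 2)

section periodizedGaussian

variable {β : ℝ}

theorem im_div_two_pi_mul_I_pos (hβ : 0 < β) : 0 < ((β / (2 * π) : ℂ) * I).im := by
  rw [mul_I_im]
  exact_mod_cast div_pos hβ Real.two_pi_pos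

theorem gaussian_eq_mul_jacobiTheta₂_term (a : ℂ) (p : ℤ) :
    cexp (-(β / 2 : ℂ) * (p - a) ^ 2) = cexp (-(β / 2 : ℂ) * a ^ 2) *
      jacobiTheta₂_term p (-β * I * a / (2 * π)) (β / (2 * π) * I) := by
  rw [jacobiTheta₂_term, ← Complex.exp_add]
  congr 1
  have hπ : (π : ℂ) ≠ 0 := by exact_mod_cast Real.pi_ne_zero
  field_simp
  ring_nf
  simp only [I_sq]
  ring

theorem summable_gaussian_intCast_sub (hβ : 0 < β) (a : ℂ) :
    Summable fun p : ℤ => cexp (-(β / 2 : ℂ) * (p - a) ^ 2) :=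
  (((summable_jacobiTheta₂_term_iff _ _).2 (im_div_two_pi_mul_I_pos hβ)).mul_left _).congr
    fun p => (gaussian_eq_mul_jacobiTheta₂_term a p).symm

theorem periodizedGaussian_eq_mul_jacobiTheta₂ (a : ℂ) :
    periodizedGaussian β a = cexp (-(β / 2 : ℂ) * a ^ 2) *
      jacobiTheta₂ (-β * I * a / (2 * π)) (β / (2 * π) * I) := by
  simp only [periodizedGaussian, jacobiTheta₂, ← tsum_mul_left,
    ← gaussian_eq_mul_jacobiTheta₂_term]

theorem differentiable_periodizedGaussian (hβ : 0 < β) :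
    Differentiable ℂ (periodizedGaussian β) := by
  intro a
  rw [funext periodizedGaussian_eq_mul_jacobiTheta₂]
  exact (by fun_prop : DifferentiableAt ℂ (fun a : ℂ => cexp (-(β / 2 : ℂ) * a ^ 2)) a).mul
    ((differentiableAt_jacobiTheta₂_fst _ (im_div_two_pi_mul_I_pos hβ)).comp a (by fun_prop))

theorem periodizedGaussian_zero_ne_zero (hβ : 0 < β) : periodizedGaussian β 0 ≠ 0 := by
  have hreal : ∀ p : ℤ,
      cexp (-(β / 2 : ℂ) * (p - 0) ^ 2) = (Real.exp (-(β / 2) * p ^ 2) : ℝ) := by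
    intro p
    push_cast
    ring_nf
  have hsum : Summable fun p : ℤ => Real.exp (-(β / 2) * p ^ 2) := by
    simpa only [hreal, Complex.summable_ofReal] using summable_gaussian_intCast_sub hβ 0
  rw [periodizedGaussian, tsum_congr hreal, ← Complex.ofReal_tsum, Complex.ofReal_ne_zero]
  exact (hsum.tsum_pos (fun _ => (Real.exp_pos _).le) 0 (Real.exp_pos _)).ne'

theorem periodizedGaussian_add_intCast (a : ℂ) (m : ℤ) :
    periodizedGaussian β (a + m) = periodizedGaussian β a := by
  rw [periodizedGaussian, periodizedGaussian, ← (Equiv.addRight m).tsum_eq]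
  refine tsum_congr fun p => ?_
  simp only [Equiv.coe_addRight, Int.cast_add]
  ring_nf

theorem tsum_gaussian_add_intCast_sub (a : ℂ) (n : ℤ) :
    ∑' m : ℤ, cexp (-(β / 2 : ℂ) * (a + m - n) ^ 2) = periodizedGaussian β a := by
  rw [periodizedGaussian, ← (Equiv.subLeft n).tsum_eq]
  refine tsum_congr fun p => ?_
  simp only [Equiv.subLeft_apply, Int.cast_sub]
  ring_nf

theorem tsum_gaussian_div_periodizedGaussian {a : ℂ} (ha : periodizedGaussian β a ≠ 0) (n : ℤ) :
    ∑' m : ℤ, cexp (-(β / 2 : ℂ) * (a + m - n) ^ 2) / periodizedGaussian β (a + m) = 1 := by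
  simp only [periodizedGaussian_add_intCast, tsum_div_const, tsum_gaussian_add_intCast_sub,
    div_self ha]

end periodizedGaussian

theorem Differentiable.ae_ne_zero_comp_ofReal {f : ℂ → ℂ} (hf : Differentiable ℂ f) {z₀ : ℂ}
    (hz₀ : f z₀ ≠ 0) : ∀ᵐ x : ℝ, f x ≠ 0 := by
  have hfa : AnalyticOnNhd ℂ f univ := fun z _ => hf.analyticAt z
  obtain ⟨x₀, hx₀⟩ : ∃ x : ℝ, f x ≠ 0 := by
    by_contra! hzero
    have hfreq : ∃ᶠ z in 𝓝[≠] (0 : ℂ), f z = 0 := by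
      have hreal : Tendsto ((↑) : ℝ → ℂ) (𝓝[≠] 0) (𝓝[≠] 0) :=
        tendsto_nhdsWithin_of_tendsto_nhds_of_eventually_within _
          (Complex.continuous_ofReal.tendsto' 0 0 Complex.ofReal_zero |>.mono_left
            nhdsWithin_le_nhds)
          (eventually_nhdsWithin_of_forall fun x hx => by simpa using hx)
      exact hreal.frequently (Frequently.of_forall hzero)
    exact hz₀ (hfa.eqOn_zero_of_preconnected_of_frequently_eq_zero isPreconnected_univ
      (mem_univ 0) hfreq (mem_univ z₀))
  have hga : AnalyticOnNhd ℝ (fun x : ℝ => f x) univ := fun x _ =>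
    ((hfa x (mem_univ _)).restrictScalars (𝕜 := ℝ)).comp (Complex.ofRealCLM.analyticAt x)
  have hae := ae_restrict_le_codiscreteWithin (μ := volume) MeasurableSet.univ
    (hga.preimage_zero_mem_codiscrete hx₀)
  rwa [Measure.restrict_univ] at hae

theorem integral_eq_integral_Ico_tsum_add_intCast {E : Type*} [NormedAddCommGroup E]
    [NormedSpace ℝ E] {f : ℝ → E} (hf : Integrable f) :
    ∫ x, f x = ∫ x in Ico (0 : ℝ) 1, ∑' m : ℤ, f (x + m) := by
  have hmeas : ∀ m : ℤ, MeasurableSet (Ico (m : ℝ) (m + 1)) := fun _ => measurableSet_Ico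
  have hdisj := pairwise_disjoint_Ico_intCast (α := ℝ)
  have htrans : ∀ m : ℤ, (· + (m : ℝ)) '' Ico 0 1 = Ico (m : ℝ) (m + 1) := fun m => by
    rw [image_add_const_Ico, zero_add, add_comm]
  have hemb : ∀ m : ℤ, MeasurableEmbedding (· + (m : ℝ)) :=
    fun m => (Homeomorph.addRight (m : ℝ)).measurableEmbedding
  have hpres : ∀ m : ℤ, MeasurePreserving (· + (m : ℝ)) := fun m => measurePreserving_add_right _ _
  have hsum : ∑' m : ℤ, ∫⁻ x in Ico (0 : ℝ) 1, ‖f (x + m)‖ₑ ≠ ⊤ := by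
    have hshift : ∀ m : ℤ,
        ∫⁻ x in Ico (0 : ℝ) 1, ‖f (x + m)‖ₑ = ∫⁻ x in Ico (m : ℝ) (m + 1), ‖f x‖ₑ :=
      fun m => by rw [← htrans m, ← (hpres m).setLIntegral_comp_emb (hemb m)]
    rw [tsum_congr hshift, ← lintegral_iUnion hmeas hdisj, iUnion_Ico_intCast,
      Measure.restrict_univ]
    exact hf.2.ne
  calc ∫ x, f x = ∑' m : ℤ, ∫ x in Ico (m : ℝ) (m + 1), f x := by
        rw [← integral_iUnion hmeas hdisj (by rw [iUnion_Ico_intCast]; exact hf.integrableOn),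
          iUnion_Ico_intCast, Measure.restrict_univ]
    _ = ∑' m : ℤ, ∫ x in Ico (0 : ℝ) 1, f (x + m) :=
        tsum_congr fun m => by rw [← htrans m, (hpres m).setIntegral_image_emb (hemb m)]
    _ = ∫ x in Ico (0 : ℝ) 1, ∑' m : ℤ, f (x + m) :=
        (integral_tsum (fun m : ℤ => (hf.comp_add_right (m : ℝ)).aestronglyMeasurable.restrict)
          hsum).symm

theorem integral_gaussian_div_periodizedGaussian {β : ℝ} (hβ : 0 < β) (y : ℝ) (n : ℤ)
    (hint : Integrable fun x : ℝ =>
      cexp (-(β / 2 : ℂ) * (x + y * I - n) ^ 2) / periodizedGaussian β (x + y * I)) :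
    ∫ x : ℝ, cexp (-(β / 2 : ℂ) * (x + y * I - n) ^ 2) / periodizedGaussian β (x + y * I) = 1 := by
  have hne : ∀ᵐ x : ℝ, periodizedGaussian β (x + y * I) ≠ 0 :=
    ((differentiable_periodizedGaussian hβ).comp (differentiable_id.add_const _))
      |>.ae_ne_zero_comp_ofReal (z₀ := -(y * I)) (by simpa using periodizedGaussian_zero_ne_zero hβ)
  have hone : ∀ᵐ x : ℝ, ∑' m : ℤ, cexp (-(β / 2 : ℂ) * ((x + m : ℝ) + y * I - n) ^ 2) /
      periodizedGaussian β ((x + m : ℝ) + y * I) = 1 := by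
    filter_upwards [hne] with x hx
    simpa only [Complex.ofReal_add, Complex.ofReal_intCast, add_right_comm _ _ (y * I)] using
      tsum_gaussian_div_periodizedGaussian hx n
  rw [integral_eq_integral_Ico_tsum_add_intCast hint,
    setIntegral_congr_ae measurableSet_Ico (hone.mono fun x hx _ => hx)]
  simp

theorem ofReal_cpow_ofReal_eq_exp {q : ℝ} (hq : 0 < q) (t : ℝ) :
    (q : ℂ) ^ (t : ℂ) = cexp (Real.log q * t) := by
  rw [cpow_def_of_ne_zero (by exact_mod_cast hq.ne'), ← ofReal_log hq.le]

section ExpAffineSubstitution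

variable {E : Type*} [NormedAddCommGroup E] [NormedSpace ℝ E] {b : ℝ} (c : ℝ) (g : ℝ → E)

theorem image_univ_exp_affine (hb : b ≠ 0) : (fun x => rexp (b * x + c)) '' univ = Ioi 0 := by
  rw [← Real.range_exp, image_univ]
  refine Function.Surjective.range_comp (f := fun x => b * x + c)
    (fun y => ⟨(y - c) / b, ?_⟩) rexp
  field_simp
  ring

theorem hasDerivAt_exp_affine (x : ℝ) :
    HasDerivAt (fun x => rexp (b * x + c)) (b * rexp (b * x + c)) x := by
  simpa [mul_comm] using ((hasDerivAt_id x).const_mul b |>.add_const c).exp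

theorem injective_exp_affine (hb : b ≠ 0) : (fun x => rexp (b * x + c)).Injective :=
  fun _ _ h => mul_left_cancel₀ hb (add_right_cancel (Real.exp_injective h))

theorem integral_comp_exp_affine (hb : 0 < b) :
    ∫ x, (b * rexp (b * x + c)) • g (rexp (b * x + c)) = ∫ y in Ioi 0, g y := by
  rw [← image_univ_exp_affine c hb.ne', integral_image_eq_integral_abs_deriv_smul
    MeasurableSet.univ (fun x _ => (hasDerivAt_exp_affine c x).hasDerivWithinAt)
    (injective_exp_affine c hb.ne').injOn, Measure.restrict_univ]
  simp only [abs_of_pos (mul_pos hb (Real.exp_pos _))]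

theorem integrable_comp_exp_affine_iff (hb : 0 < b) :
    Integrable (fun x => (b * rexp (b * x + c)) • g (rexp (b * x + c))) ↔
      IntegrableOn g (Ioi 0) := by
  rw [← image_univ_exp_affine c hb.ne', integrableOn_image_iff_integrableOn_abs_deriv_smul
    MeasurableSet.univ (fun x _ => (hasDerivAt_exp_affine c x).hasDerivWithinAt)
    (injective_exp_affine c hb.ne').injOn, integrableOn_univ]
  simp only [abs_of_pos (mul_pos hb (Real.exp_pos _))]

end ExpAffineSubstitution

noncomputable def qLaplaceIntegrand (q : ℝ) (k n : ℕ) (d : ℝ) (T : ℂ) (r : ℝ) : ℂ :=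
  ((r : ℂ) * cexp (I * d)) ^ n / thetaQ q k ((r : ℂ) * cexp (I * d) / T) / r

section thetaQ

variable {q : ℝ} (hq : 0 < q) {k : ℕ} {β : ℝ} (hβ : Real.log q / k = β)
include hq hβ

theorem thetaQ_exp_eq (a : ℂ) :
    thetaQ q k (cexp (β * a - β / 2)) = cexp (β / 2 * a ^ 2) * periodizedGaussian β a := by
  rw [thetaQ, periodizedGaussian, ← tsum_mul_left]
  refine tsum_congr fun p => ?_
  rw [ofReal_cpow_ofReal_eq_exp hq, ← Complex.exp_int_mul, ← Complex.exp_add, ← Complex.exp_add,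
    ← hβ]
  congr 1
  push_cast
  ring

theorem exp_pow_div_thetaQ_exp (a : ℂ) (n : ℕ) :
    cexp (β * a - β / 2) ^ n / thetaQ q k (cexp (β * a - β / 2)) =
      cexp (β * n * (n - 1) / 2) *
        (cexp (-(β / 2 : ℂ) * (a - n) ^ 2) / periodizedGaussian β a) := by
  rw [thetaQ_exp_eq hq hβ, ← Complex.exp_nat_mul, ← div_div, mul_div_assoc', ← Complex.exp_add,
    ← Complex.exp_sub]
  congr 2
  ring

theorem qLaplaceIntegrand_comp_exp_affine (n : ℕ) (d : ℝ) {T : ℂ} (hT : T ≠ 0) {c y : ℝ}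
    (hc : (c : ℂ) + I * d = Complex.log T + β * y * I - β / 2) (x : ℝ) :
    (β * rexp (β * x + c)) • qLaplaceIntegrand q k n d T (rexp (β * x + c)) =
      β * (T ^ n * cexp (β * n * (n - 1) / 2)) *
        (cexp (-(β / 2 : ℂ) * (x + y * I - n) ^ 2) / periodizedGaussian β (x + y * I)) := by
  have hu : (rexp (β * x + c) : ℂ) * cexp (I * d) = T * cexp (β * (x + y * I) - β / 2) := by
    conv_rhs => rw [← Complex.exp_log hT]
    rw [Complex.ofReal_exp, ← Complex.exp_add, ← Complex.exp_add]
    congr 1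
    push_cast
    linear_combination hc
  calc (β * rexp (β * x + c)) • qLaplaceIntegrand q k n d T (rexp (β * x + c))
      = β * (T ^ n * (cexp (β * (x + y * I) - β / 2) ^ n /
          thetaQ q k (cexp (β * (x + y * I) - β / 2)))) := by
        simp only [qLaplaceIntegrand, Complex.real_smul, hu, mul_div_cancel_left₀ _ hT]
        push_cast
        field_simp
        ring
    _ = _ := by
        rw [exp_pow_div_thetaQ_exp hq hβ]
        ring

theorem integral_qLaplaceIntegrand (hβ₀ : 0 < β) (n : ℕ) (d : ℝ) {T : ℂ} (hT : T ≠ 0) {c y : ℝ}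
    (hc : (c : ℂ) + I * d = Complex.log T + β * y * I - β / 2)
    (hint : IntegrableOn (qLaplaceIntegrand q k n d T) (Ioi 0)) :
    ∫ r in Ioi 0, qLaplaceIntegrand q k n d T r = β * (T ^ n * cexp (β * n * (n - 1) / 2)) := by
  have hsubst := qLaplaceIntegrand_comp_exp_affine hq hβ n d hT hc
  have hK : (β : ℂ) * (T ^ n * cexp (β * n * (n - 1) / 2)) ≠ 0 := by simp [hβ₀.ne', hT]
  have hG := integral_gaussian_div_periodizedGaussian hβ₀ y n
  simp only [Int.cast_natCast] at hG
  rw [← integral_comp_exp_affine c _ hβ₀, integral_congr_ae (.of_forall hsubst), integral_const_mul,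
    hG ((integrable_const_mul_iff (IsUnit.mk0 _ hK) _).1
      (((integrable_comp_exp_affine_iff c _ hβ₀).2 hint).congr (.of_forall hsubst))), mul_one]

end thetaQ

/-- the `q`-Laplace transform of order `k` of the monomial `z ↦ zⁿ` along
direction `d`, i.e. `(k/log q)·∫_{L_d} uⁿ / Θ_{q^{1/k}}(u/T) · du/u` with
`L_d = [0,∞)e^{id}`, equals `q^{n(n−1)/(2k)} Tⁿ`. -/
theorem qLaplace_monomial (q : ℝ) (hq : 1 < q) (k : ℕ) (hk : 1 ≤ k) (n : ℕ) (d : ℝ)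
    (T : ℂ) (hT : T ≠ 0)
    (hint : MeasureTheory.IntegrableOn
      (fun r : ℝ => ((r : ℂ) * Complex.exp (Complex.I * d)) ^ n /
          thetaQ q k (((r : ℂ) * Complex.exp (Complex.I * d)) / T) / (r : ℂ))
      (Set.Ioi (0 : ℝ))) :
    ((k : ℂ) / (Real.log q : ℂ)) *
      ∫ r in Set.Ioi (0 : ℝ),
        ((r : ℂ) * Complex.exp (Complex.I * d)) ^ n /
          thetaQ q k (((r : ℂ) * Complex.exp (Complex.I * d)) / T) / (r : ℂ)
      = ((q : ℂ) ^ (((n * (n - 1) : ℝ) / (2 * k) : ℝ) : ℂ)) * T ^ n := by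
  change IntegrableOn (qLaplaceIntegrand q k n d T) _ at hint
  change _ * ∫ r in Ioi 0, qLaplaceIntegrand q k n d T r = _
  have hq₀ : 0 < q := zero_lt_one.trans hq
  obtain ⟨β, hβ_def⟩ : ∃ β, Real.log q / k = β := ⟨_, rfl⟩
  have hβ : 0 < β := hβ_def ▸ div_pos (Real.log_pos hq) (by exact_mod_cast hk)
  have hc : ((Real.log ‖T‖ - β / 2 : ℝ) : ℂ) + I * d =
      Complex.log T + β * ((d - arg T) / β : ℝ) * I - β / 2 := by
    have hβc : (β : ℂ) ≠ 0 := by exact_mod_cast hβ.ne'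
    rw [Complex.log]
    push_cast
    field_simp
    ring
  have hβk : (k : ℂ) / Real.log q * β = 1 := by
    have hkc : (k : ℂ) ≠ 0 := by exact_mod_cast (by omega : k ≠ 0)
    have hlogc : (Real.log q : ℂ) ≠ 0 := by exact_mod_cast (Real.log_pos hq).ne'
    rw [← hβ_def]
    push_cast
    field_simp
  rw [integral_qLaplaceIntegrand hq₀ hβ_def hβ n d hT hc hint, ← mul_assoc, hβk, one_mul,
    mul_comm, ofReal_cpow_ofReal_eq_exp hq₀, ← hβ_def]
  congr 2
  push_cast
  ring
end

section
/- Let β>0, μ>1, f ∈ E_{(β,μ)} and 0 < β' < β. Then the inverse Fourier transform F⁻¹(f)(x) = (2π)^{−1/2}∫_{−∞}^{∞} f(m) e^{ixm} dm extends to a holomorphic function on the horizontal strip H_{β'} = {z ∈ ℂ : |Im z| < β'}. -/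
/-!
For `|Im z| ≤ b < β` the integrand `f(m) e^{izm}` is bounded by `C e^{-(β-b)|m|}`, and its
`z`-derivative `i m f(m) e^{izm}` by a multiple of `e^{-(β-b')|m|}` for any `b < b' < β`;
both bounds are integrable and locally uniform in `z`, so differentiation under the integral
sign gives holomorphy on the whole strip `|Im z| < β`, in particular on `H_{β'}`.
-/

/-- The weighted quantity `(1+|m|)^μ e^{β|m|} |f(m)|`. -/
noncomputable def Eweight (β μ : ℝ) (f : ℝ → ℂ) (m : ℝ) : ℝ :=
  (1 + |m|) ^ μ * Real.exp (β * |m|) * ‖f m‖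

/-- Membership in the space `E_{(β,μ)}`: continuous with finite weighted sup. -/
def MemE (β μ : ℝ) (f : ℝ → ℂ) : Prop :=
  Continuous f ∧ BddAbove (Set.range (Eweight β μ f))

open MeasureTheory Set Complex

lemma integrable_exp_neg_mul_abs {a : ℝ} (ha : 0 < a) :
    Integrable fun x : ℝ => Real.exp (-a * |x|) := by
  rw [← integrableOn_univ, ← Iic_union_Ioi (a := (0 : ℝ)), integrableOn_union]
  constructor
  · refine (integrableOn_exp_mul_Iic ha 0).congr_fun (fun x hx => ?_) measurableSet_Iic
    rw [abs_of_nonpos hx, neg_mul_neg]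
  · refine (integrableOn_exp_mul_Ioi (neg_neg_of_pos ha) 0).congr_fun (fun x hx => ?_)
      measurableSet_Ioi
    rw [abs_of_pos hx]

lemma abs_le_inv_mul_exp_mul_abs {ε : ℝ} (hε : 0 < ε) (x : ℝ) :
    |x| ≤ ε⁻¹ * Real.exp (ε * |x|) := by
  rw [le_inv_mul_iff₀ hε]
  linarith [Real.add_one_le_exp (ε * |x|)]

lemma norm_cexp_I_mul_mul_le (z : ℂ) (x : ℝ) :
    ‖cexp (I * z * x)‖ ≤ Real.exp (|z.im| * |x|) := by
  rw [norm_exp, Real.exp_le_exp]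
  have : (I * z * x).re = -(z.im * x) := by simp
  rw [this, ← abs_mul]
  exact neg_le_abs _

lemma hasDerivAt_cexp_I_mul_mul (z : ℂ) (x : ℝ) :
    HasDerivAt (fun w : ℂ => cexp (I * w * x)) (I * x * cexp (I * z * x)) z := by
  have h : HasDerivAt (fun w : ℂ => I * w * x) (I * x) z := by
    simpa using ((hasDerivAt_id z).const_mul I).mul_const (x : ℂ)
  simpa [mul_comm] using h.cexp

lemma abs_im_lt_of_mem_ball {z z₀ : ℂ} {ε : ℝ} (hz : z ∈ Metric.ball z₀ ε) :
    |z.im| < |z₀.im| + ε := by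
  have h₁ := abs_sub_abs_le_abs_sub z.im z₀.im
  have h₂ : |(z - z₀).im| ≤ ‖z - z₀‖ := abs_im_le_norm _
  rw [Metric.mem_ball, dist_eq] at hz
  rw [sub_im] at h₂
  linarith

section ExponentialDecay

variable {f : ℝ → ℂ} {β C : ℝ}

lemma norm_mul_cexp_I_mul_mul_le (hf : ∀ x, ‖f x‖ ≤ C * Real.exp (-β * |x|)) {z : ℂ} {b : ℝ}
    (hz : |z.im| ≤ b) (x : ℝ) :
    ‖f x * cexp (I * z * x)‖ ≤ C * Real.exp (-(β - b) * |x|) := by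
  have hC : 0 ≤ C := nonneg_of_mul_nonneg_left ((norm_nonneg _).trans (hf 0)) (Real.exp_pos _)
  calc ‖f x * cexp (I * z * x)‖ ≤ C * Real.exp (-β * |x|) * Real.exp (b * |x|) := by
        rw [norm_mul]
        gcongr
        · exact hf x
        · exact (norm_cexp_I_mul_mul_le z x).trans (by gcongr)
    _ = C * Real.exp (-(β - b) * |x|) := by
        rw [mul_assoc, ← Real.exp_add]
        ring_nf

lemma integrable_mul_cexp_I_mul (hfm : AEStronglyMeasurable f)
    (hf : ∀ x, ‖f x‖ ≤ C * Real.exp (-β * |x|)) {z : ℂ} (hz : |z.im| < β) :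
    Integrable fun x : ℝ => f x * cexp (I * z * x) :=
  ((integrable_exp_neg_mul_abs (sub_pos.2 hz)).const_mul C).mono'
    (hfm.mul (by fun_prop : Continuous fun x : ℝ => cexp (I * z * x)).aestronglyMeasurable)
    (ae_of_all _ (norm_mul_cexp_I_mul_mul_le hf le_rfl))

lemma differentiableAt_integral_mul_cexp_I_mul (hfm : AEStronglyMeasurable f)
    (hf : ∀ x, ‖f x‖ ≤ C * Real.exp (-β * |x|)) {z₀ : ℂ} (hz₀ : |z₀.im| < β) :
    DifferentiableAt ℂ (fun z => ∫ x : ℝ, f x * cexp (I * z * x)) z₀ := by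
  -- On the ball of radius `ε` the integrand decays like `exp (-2ε|x|)`; half of that decay
  -- absorbs the factor `x` of the derivative.
  set ε := (β - |z₀.im|) / 3 with hε_def
  have hε : 0 < ε := by linarith
  have hderiv_le : ∀ x : ℝ, ∀ z ∈ Metric.ball z₀ ε,
      ‖f x * (I * x * cexp (I * z * x))‖ ≤ ε⁻¹ * C * Real.exp (-ε * |x|) := fun x z hz =>
    calc ‖f x * (I * x * cexp (I * z * x))‖ = |x| * ‖f x * cexp (I * z * x)‖ := by
          simp only [norm_mul, norm_I, norm_real, Real.norm_eq_abs]
          ring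
      _ ≤ ε⁻¹ * Real.exp (ε * |x|) * (C * Real.exp (-(β - (|z₀.im| + ε)) * |x|)) := by
          gcongr
          · exact abs_le_inv_mul_exp_mul_abs hε x
          · exact norm_mul_cexp_I_mul_mul_le hf (abs_im_lt_of_mem_ball hz).le x
      _ = ε⁻¹ * C * Real.exp (-ε * |x|) := by
          rw [mul_mul_mul_comm, ← Real.exp_add, hε_def]
          ring_nf
  refine (hasDerivAt_integral_of_dominated_loc_of_deriv_le (Metric.ball_mem_nhds z₀ hε)
    (.of_forall fun z => ?_) (integrable_mul_cexp_I_mul hfm hf hz₀) ?_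
    (ae_of_all _ hderiv_le) ((integrable_exp_neg_mul_abs hε).const_mul _)
    (ae_of_all _ fun x z _ => (hasDerivAt_cexp_I_mul_mul z x).const_mul (f x))).2.differentiableAt
  · exact hfm.mul (by fun_prop : Continuous fun x : ℝ => cexp (I * z * x)).aestronglyMeasurable
  · exact hfm.mul
      (by fun_prop : Continuous fun x : ℝ => I * x * cexp (I * z₀ * x)).aestronglyMeasurable

theorem differentiableOn_integral_mul_cexp_I_mul (hfm : AEStronglyMeasurable f)
    (hf : ∀ x, ‖f x‖ ≤ C * Real.exp (-β * |x|)) :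
    DifferentiableOn ℂ (fun z => ∫ x : ℝ, f x * cexp (I * z * x)) {z : ℂ | |z.im| < β} :=
  fun _ hz => (differentiableAt_integral_mul_cexp_I_mul hfm hf hz).differentiableWithinAt

end ExponentialDecay

lemma MemE.exists_norm_le_mul_exp {β μ : ℝ} {f : ℝ → ℂ} (hf : MemE β μ f) (hμ : 0 ≤ μ) :
    ∃ C, ∀ x, ‖f x‖ ≤ C * Real.exp (-β * |x|) := by
  obtain ⟨C, hC⟩ := hf.2
  refine ⟨C, fun x => ?_⟩
  have hweight : Real.exp (β * |x|) * ‖f x‖ ≤ Eweight β μ f x := by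
    unfold Eweight
    rw [mul_assoc]
    exact le_mul_of_one_le_left (by positivity) (Real.one_le_rpow (by simp) hμ)
  rw [neg_mul, Real.exp_neg, ← div_eq_mul_inv, le_div_iff₀ (Real.exp_pos _), mul_comm]
  exact hweight.trans (hC ⟨x, rfl⟩)

theorem inverseFourier_holomorphic_on_strip_general (β μ β' : ℝ) (hμ : 1 < μ)
    (hβ'β : β' < β) (f : ℝ → ℂ) (hf : MemE β μ f) :
    ∃ F : ℂ → ℂ,
      DifferentiableOn ℂ F {z : ℂ | |z.im| < β'} ∧
      (∀ z ∈ {z : ℂ | |z.im| < β'},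
        F z = ((2 * Real.pi) ^ (-(1 : ℝ) / 2) : ℝ) *
          ∫ m : ℝ, f m * Complex.exp (Complex.I * z * m)) ∧
      (∀ x : ℝ,
        F x = ((2 * Real.pi) ^ (-(1 : ℝ) / 2) : ℝ) *
          ∫ m : ℝ, f m * Complex.exp (Complex.I * x * m)) := by
  obtain ⟨C, hC⟩ := hf.exists_norm_le_mul_exp (by linarith)
  have hstrip : {z : ℂ | |z.im| < β'} ⊆ {z : ℂ | |z.im| < β} := fun z hz => lt_trans hz hβ'β
  refine ⟨fun z => ((2 * Real.pi) ^ (-(1 : ℝ) / 2) : ℝ) *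
      ∫ m : ℝ, f m * Complex.exp (Complex.I * z * m), ?_, fun z _ => rfl, fun x => rfl⟩
  exact ((differentiableOn_integral_mul_cexp_I_mul hf.1.aestronglyMeasurable hC).mono
    hstrip).const_mul _

/-- for `f ∈ E_{(β,μ)}` and `0 < β' < β`, the inverse Fourier transform
`F⁻¹(f)(x) = (2π)^{−1/2} ∫ f(m) e^{ixm} dm` extends holomorphically to the horizontal
strip `H_{β'} = {z : |Im z| < β'}`, by the formula `z ↦ (2π)^{−1/2} ∫ f(m) e^{izm} dm`. -/
theorem inverseFourier_holomorphic_on_strip (β μ β' : ℝ) (hβ : 0 < β) (hμ : 1 < μ)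
    (hβ' : 0 < β') (hβ'β : β' < β) (f : ℝ → ℂ) (hf : MemE β μ f) :
    ∃ F : ℂ → ℂ,
      DifferentiableOn ℂ F {z : ℂ | |z.im| < β'} ∧
      (∀ z ∈ {z : ℂ | |z.im| < β'},
        F z = ((2 * Real.pi) ^ (-(1 : ℝ) / 2) : ℝ) *
          ∫ m : ℝ, f m * Complex.exp (Complex.I * z * m)) ∧
      (∀ x : ℝ,
        F x = ((2 * Real.pi) ^ (-(1 : ℝ) / 2) : ℝ) *
          ∫ m : ℝ, f m * Complex.exp (Complex.I * x * m)) :=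
  inverseFourier_holomorphic_on_strip_general β μ β' hμ hβ'β f hf
end

section
/- Let k ≥ 1, q > 1, and let γ₁, γ₂, γ₃ ≥ 0 with γ₁ + k·γ₃ ≥ γ₂. Then the function u ↦ (1+u)^{−γ₁}·u^{γ₂}·exp( (k/(2 log q))·( (log(q^{−γ₃}u + δ))² − (log(u+δ))² ) + α·( log(q^{−γ₃}u+δ) − log(u+δ) ) ) is bounded above on u ∈ (0,∞) by a constant C₁ depending only on k, q, α, δ ≥ 1 and the γ_j. -/
set_option maxHeartbeats 4000000

/-- the scalar estimate underlying the shift operator bound.  For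
`γ₁, γ₂, γ₃ ≥ 0` with `γ₁ + k γ₃ ≥ γ₂`, `δ ≥ 1`, the function
`u ↦ (1+u)^{−γ₁} u^{γ₂} exp((k/(2 log q))((log(q^{−γ₃}u+δ))² − (log(u+δ))²)
      + α(log(q^{−γ₃}u+δ) − log(u+δ)))`
is bounded on `(0,∞)` by a constant `C₁` depending only on `k, q, α, δ` and the `γⱼ`. -/
theorem shift_weight_bounded (k : ℕ) (hk : 1 ≤ k) (q : ℝ) (hq : 1 < q)
    (α δ γ₁ γ₂ γ₃ : ℝ) (hδ : 1 ≤ δ)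
    (hγ₁ : 0 ≤ γ₁) (hγ₂ : 0 ≤ γ₂) (hγ₃ : 0 ≤ γ₃) (hγ : γ₂ ≤ γ₁ + k * γ₃) :
    ∃ C₁ : ℝ, 0 < C₁ ∧ ∀ u : ℝ, 0 < u →
      (1 + u) ^ (-γ₁) * u ^ γ₂ *
        Real.exp ((k / (2 * Real.log q)) *
            ((Real.log (q ^ (-γ₃) * u + δ)) ^ 2 - (Real.log (u + δ)) ^ 2) +
          α * (Real.log (q ^ (-γ₃) * u + δ) - Real.log (u + δ)))
        ≤ C₁ := by
  have hq0 : (0:ℝ) < q := by linarith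
  set L := Real.log q with hLdef
  have hL : 0 < L := Real.log_pos hq
  set c := q ^ (-γ₃) with hcdef
  have hc0 : 0 < c := Real.rpow_pos_of_pos hq0 _
  have hc1 : c ≤ 1 := Real.rpow_le_one_of_one_le_of_nonpos hq.le (by linarith)
  have hlogc : Real.log c = -γ₃ * L := by
    rw [hcdef, Real.log_rpow hq0]
  set K := 1 + Real.log (1 + δ) with hKdef
  have hlog1δ : 0 ≤ Real.log (1 + δ) := Real.log_nonneg (by linarith)
  have hK0 : 1 ≤ K := by simp [hKdef]; linarith
  set C₃ : ℝ := γ₃ ^ 2 * L ^ 2 + 2 * K * δ / c with hC₃def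
  set C₄ : ℝ := k * C₃ / (2 * L) + |α| * γ₃ * L with hC₄def
  set Ca : ℝ := Real.exp (γ₃ * L / 2 * γ₂ + |α| * γ₃ * L) with hCadef
  refine ⟨max Ca (Real.exp C₄), lt_max_of_lt_left (Real.exp_pos _), fun u hu => ?_⟩
  set A := Real.log (c * u + δ) with hAdef
  set B := Real.log (u + δ) with hBdef
  have huδ : 0 < u + δ := by linarith
  have hcuδ : (1:ℝ) ≤ c * u + δ := by nlinarith
  have hA0 : 0 ≤ A := Real.log_nonneg hcuδ
  have hB0 : 0 ≤ B := Real.log_nonneg (by linarith)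
  have hAB : A ≤ B := Real.log_le_log (by linarith) (by nlinarith)
  -- lower bound : B - γ₃ L ≤ A
  have hlow : B - γ₃ * L ≤ A := by
    have h1 : Real.log (c * (u + δ)) ≤ A :=
      Real.log_le_log (by positivity) (by nlinarith)
    rw [Real.log_mul (ne_of_gt hc0) (ne_of_gt huδ), hlogc] at h1
    linarith
  -- upper bound : A ≤ B - γ₃ L + δ/(c u)
  have hupp : A ≤ B - γ₃ * L + δ / (c * u) := by
    have hd0 : 0 ≤ δ / (c * u) := by positivity
    have hkey : c * u + δ ≤ c * (u + δ) * Real.exp (δ / (c * u)) := by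
      have he : 1 + δ / (c * u) ≤ Real.exp (δ / (c * u)) := by
        have := Real.add_one_le_exp (δ / (c * u)); linarith
      have heq : c * (u + δ) * (1 + δ / (c * u)) =
          c * u + c * δ + δ + δ * δ / u := by
        field_simp; ring
      have h2 : c * u + δ ≤ c * (u + δ) * (1 + δ / (c * u)) := by
        rw [heq]
        have h0 : 0 ≤ δ * δ / u := by positivity
        nlinarith
      have h3 : c * (u + δ) * (1 + δ / (c * u)) ≤
          c * (u + δ) * Real.exp (δ / (c * u)) :=
        mul_le_mul_of_nonneg_left he (by positivity)
      linarith
    have h3 : A ≤ Real.log (c * (u + δ) * Real.exp (δ / (c * u))) :=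
      Real.log_le_log (by positivity) hkey
    rw [Real.log_mul (by positivity) (ne_of_gt (Real.exp_pos _)),
      Real.log_mul (ne_of_gt hc0) (ne_of_gt huδ), Real.log_exp, hlogc] at h3
    linarith
  have hαterm : α * (A - B) ≤ |α| * γ₃ * L := by
    have h1 : α * (A - B) ≤ |α| * (B - A) := by
      nlinarith [neg_abs_le α, le_abs_self α, abs_nonneg α]
    have h2 : B - A ≤ γ₃ * L := by linarith
    nlinarith [abs_nonneg α]
  have h1u : (1 + u) ^ (-γ₁) ≤ 1 :=
    Real.rpow_le_one_of_one_le_of_nonpos (by linarith) (by linarith)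
  rcases le_or_gt u (Real.exp (γ₃ * L / 2)) with hcase | hcase
  · -- small u
    have hT : (↑k / (2 * L)) * (A ^ 2 - B ^ 2) + α * (A - B) ≤ |α| * γ₃ * L := by
      have hsq : A ^ 2 - B ^ 2 ≤ 0 := by nlinarith
      have hkL : 0 ≤ (k:ℝ) / (2 * L) := by positivity
      nlinarith
    have hu2 : u ^ γ₂ ≤ Real.exp (γ₃ * L / 2 * γ₂) := by
      calc u ^ γ₂ ≤ (Real.exp (γ₃ * L / 2)) ^ γ₂ :=
            Real.rpow_le_rpow hu.le hcase hγ₂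
        _ = Real.exp (γ₃ * L / 2 * γ₂) := by
            rw [← Real.exp_log (Real.rpow_pos_of_pos (Real.exp_pos _) _),
              Real.log_rpow (Real.exp_pos _), Real.log_exp]
            ring_nf
    have hfin : (1 + u) ^ (-γ₁) * u ^ γ₂ * Real.exp ((↑k / (2 * L)) * (A ^ 2 - B ^ 2) + α * (A - B)) ≤ Ca := by
      have hexp : Real.exp ((↑k / (2 * L)) * (A ^ 2 - B ^ 2) + α * (A - B)) ≤
          Real.exp (|α| * γ₃ * L) := Real.exp_le_exp.mpr hT
      calc (1 + u) ^ (-γ₁) * u ^ γ₂ * Real.exp ((↑k / (2 * L)) * (A ^ 2 - B ^ 2) + α * (A - B))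
          ≤ 1 * (Real.exp (γ₃ * L / 2 * γ₂)) * Real.exp (|α| * γ₃ * L) := by
            apply mul_le_mul (mul_le_mul h1u hu2 (by positivity) zero_le_one) hexp
              (Real.exp_pos _).le (by positivity)
        _ = Ca := by rw [one_mul, hCadef, ← Real.exp_add]
    exact hfin.trans (le_max_left _ _)
  · -- large u
    have hu1 : 1 ≤ u := le_trans (by simpa using Real.exp_le_exp.mpr (by positivity : (0:ℝ) ≤ γ₃ * L / 2)) hcase.le
    have hBlb : γ₃ * L / 2 ≤ B := by
      have : γ₃ * L / 2 = Real.log (Real.exp (γ₃ * L / 2)) := (Real.log_exp _).symm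
      rw [this]
      exact Real.log_le_log (Real.exp_pos _) (by linarith)
    have hBu : B ≤ u * K := by
      have h1 : B ≤ Real.log (u * (1 + δ)) :=
        Real.log_le_log huδ (by nlinarith)
      rw [Real.log_mul (ne_of_gt hu) (by linarith)] at h1
      have h2 : Real.log u ≤ u := by
        have := Real.log_le_sub_one_of_pos hu; linarith
      have h3 : Real.log (1 + δ) ≤ u * Real.log (1 + δ) := by nlinarith
      simp only [hKdef]; nlinarith
    -- main estimate on the square difference
    have hd : δ / (c * u) * (c * u) = δ := by field_simp
    have hBd : B * (δ / (c * u)) ≤ K * δ / c := by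
      have h1 : B * (δ / (c * u)) ≤ u * K * (δ / (c * u)) :=
        mul_le_mul_of_nonneg_right hBu (by positivity)
      have h2 : u * K * (δ / (c * u)) = K * δ / c := by field_simp
      linarith [h1.trans_eq h2]
    have hsq : A ^ 2 - B ^ 2 ≤ -(2 * γ₃ * L) * B + C₃ := by
      have h1 : A ^ 2 - B ^ 2 = (A + B) * (A - B) := by ring
      have h2 : (A + B) * (A - B) ≤ (2 * B - γ₃ * L) * (A - B) := by
        nlinarith
      have h3 : (2 * B - γ₃ * L) * (A - B) ≤
          (2 * B - γ₃ * L) * (-(γ₃ * L) + δ / (c * u)) := by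
        apply mul_le_mul_of_nonneg_left (by linarith) (by linarith)
      have h4 : (2 * B - γ₃ * L) * (-(γ₃ * L) + δ / (c * u)) ≤
          -(2 * γ₃ * L) * B + C₃ := by
        have hd0 : 0 ≤ δ / (c * u) := by positivity
        have : (2 * B - γ₃ * L) * (-(γ₃ * L) + δ / (c * u)) =
            -(2 * γ₃ * L) * B + γ₃ ^ 2 * L ^ 2 + 2 * (B * (δ / (c * u)))
              - γ₃ * L * (δ / (c * u)) := by ring
        rw [this, hC₃def]
        have h5 : 0 ≤ γ₃ * L * (δ / (c * u)) := by positivity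
        have h6 : 2 * (B * (δ / (c * u))) ≤ 2 * (K * δ / c) := by linarith
        have h7 : 2 * (K * δ / c) = 2 * K * δ / c := by ring
        linarith
      exact h1.trans_le (h2.trans (h3.trans h4))
    have hT : (↑k / (2 * L)) * (A ^ 2 - B ^ 2) + α * (A - B) ≤
        -(↑k * γ₃) * B + C₄ := by
      have hkL : 0 ≤ (k:ℝ) / (2 * L) := by positivity
      have h1 : (↑k / (2 * L)) * (A ^ 2 - B ^ 2) ≤
          (↑k / (2 * L)) * (-(2 * γ₃ * L) * B + C₃) :=
        mul_le_mul_of_nonneg_left hsq hkL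
      have h2 : (↑k / (2 * L)) * (-(2 * γ₃ * L) * B + C₃) =
          -(↑k * γ₃) * B + ↑k * C₃ / (2 * L) := by
        field_simp
      rw [hC₄def]; linarith
    have hexp : Real.exp ((↑k / (2 * L)) * (A ^ 2 - B ^ 2) + α * (A - B)) ≤
        (u + δ) ^ (-(↑k * γ₃)) * Real.exp C₄ := by
      have h1 : Real.exp ((↑k / (2 * L)) * (A ^ 2 - B ^ 2) + α * (A - B)) ≤
          Real.exp (-(↑k * γ₃) * B + C₄) := Real.exp_le_exp.mpr hT
      have h2 : (u + δ) ^ (-(↑k * γ₃)) = Real.exp (-(↑k * γ₃) * B) := by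
        rw [Real.rpow_def_of_pos huδ, hBdef]; ring_nf
      rw [h2, ← Real.exp_add]
      exact h1
    have hrp1 : (1 + u) ^ (-γ₁) ≤ u ^ (-γ₁) :=
      Real.rpow_le_rpow_of_nonpos hu (by linarith) (by linarith)
    have hrp2 : (u + δ) ^ (-(↑k * γ₃)) ≤ u ^ (-(↑k * γ₃)) :=
      Real.rpow_le_rpow_of_nonpos hu (by linarith) (neg_nonpos.mpr (by positivity))
    have hprod : u ^ (-γ₁) * u ^ γ₂ * u ^ (-(↑k * γ₃)) ≤ 1 := by
      rw [← Real.rpow_add hu, ← Real.rpow_add hu]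
      exact Real.rpow_le_one_of_one_le_of_nonpos hu1 (by push_cast; linarith)
    have hfin : (1 + u) ^ (-γ₁) * u ^ γ₂ *
        Real.exp ((↑k / (2 * L)) * (A ^ 2 - B ^ 2) + α * (A - B)) ≤ Real.exp C₄ := by
      calc (1 + u) ^ (-γ₁) * u ^ γ₂ *
            Real.exp ((↑k / (2 * L)) * (A ^ 2 - B ^ 2) + α * (A - B))
          ≤ u ^ (-γ₁) * u ^ γ₂ * ((u + δ) ^ (-(↑k * γ₃)) * Real.exp C₄) := by
            apply mul_le_mul (mul_le_mul hrp1 le_rfl (by positivity) (by positivity)) hexp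
              (Real.exp_pos _).le (by positivity)
        _ ≤ u ^ (-γ₁) * u ^ γ₂ * (u ^ (-(↑k * γ₃)) * Real.exp C₄) := by
            apply mul_le_mul_of_nonneg_left
              (mul_le_mul_of_nonneg_right hrp2 (Real.exp_pos _).le) (by positivity)
        _ = (u ^ (-γ₁) * u ^ γ₂ * u ^ (-(↑k * γ₃))) * Real.exp C₄ := by ring
        _ ≤ 1 * Real.exp C₄ :=
            mul_le_mul_of_nonneg_right hprod (Real.exp_pos _).le
        _ = Real.exp C₄ := one_mul _
    exact hfin.trans (le_max_right _ _)
end
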